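/- arXiv:2104.02293 — 4 statements merged into one kernel-verified Lean document; each statement's English description precedes it below -/
import Mathlib

section
/- Let μ, μ̂ ∈ ℝ^k, let n_1,…,n_k be positive reals, and let β ≥ 0 be such that |μ̂_i − μ_i| ≤ β/√n_i for every i ∈ {1,…,k}. Then for any α ∈ [−β, β] and any index i' maximizing i ↦ μ̂_i + α/√n_i over {1,…,k}, one has max_i μ_i − μ_{i'} ≤ 4β / √(min_i n_i). -/
open Real

noncomputable section

/-- deterministic inequality behind the minimax upper bound.
If every `μ i` is within `β/√(n i)` of `μ̂ i`, then any maximizer `i'` of the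
adjusted index `μ̂ i + α/√(n i)` with `α ∈ [−β, β]` satisfies
`max_i μ i − μ i' ≤ 4β/√(min_i n i)`. -/
theorem index_algorithm_gap {k : ℕ} (hk : 1 ≤ k) (μ μhat : Fin k → ℝ) (n : Fin k → ℝ)
    (hn : ∀ i, 0 < n i) (β : ℝ) (hβ : 0 ≤ β)
    (hconf : ∀ i, |μhat i - μ i| ≤ β / Real.sqrt (n i))
    (α : ℝ) (hα : α ∈ Set.Icc (-β) β)
    (i' : Fin k)
    (hi' : ∀ j, μhat j + α / Real.sqrt (n j) ≤ μhat i' + α / Real.sqrt (n i')) :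
    (⨆ i, μ i) - μ i' ≤ 4 * β / Real.sqrt (⨅ i, n i) := by
  haveI : Nonempty (Fin k) := ⟨⟨0, hk⟩⟩
  obtain ⟨hα1, hα2⟩ := hα
  have hbdd : BddBelow (Set.range n) := (Set.finite_range n).bddBelow
  obtain ⟨j, hj⟩ := Finite.exists_min n
  have hpos : 0 < ⨅ i, n i := lt_of_lt_of_le (hn j) (le_ciInf hj)
  have hspos : 0 < Real.sqrt (⨅ i, n i) := Real.sqrt_pos.mpr hpos
  have hsle : ∀ i, Real.sqrt (⨅ i, n i) ≤ Real.sqrt (n i) := fun i =>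
    Real.sqrt_le_sqrt (ciInf_le hbdd i)
  have hspos' : ∀ i, 0 < Real.sqrt (n i) := fun i => Real.sqrt_pos.mpr (hn i)
  have key : ∀ i, μ i ≤ 4 * β / Real.sqrt (⨅ i, n i) + μ i' := by
    intro i
    have h1 : μ i - μhat i ≤ β / Real.sqrt (n i) := by
      have := abs_le.mp (hconf i); linarith [this.1]
    have h2 : μhat i' - μ i' ≤ β / Real.sqrt (n i') := by
      have := abs_le.mp (hconf i'); linarith [this.2]
    have h3 := hi' i
    have h4 : (β - α) / Real.sqrt (n i) ≤ 2 * β / Real.sqrt (⨅ i, n i) :=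
      div_le_div₀ (by linarith) (by linarith) hspos (hsle i)
    have h5 : (β + α) / Real.sqrt (n i') ≤ 2 * β / Real.sqrt (⨅ i, n i) :=
      div_le_div₀ (by linarith) (by linarith) hspos (hsle i')
    have e1 : β / Real.sqrt (n i) - α / Real.sqrt (n i) = (β - α) / Real.sqrt (n i) := by
      ring
    have e2 : β / Real.sqrt (n i') + α / Real.sqrt (n i') = (β + α) / Real.sqrt (n i') := by
      ring
    have e3 : 2 * β / Real.sqrt (⨅ i, n i) + 2 * β / Real.sqrt (⨅ i, n i)
        = 4 * β / Real.sqrt (⨅ i, n i) := by ring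
    linarith
  have := ciSup_le key
  linarith

end
end

section
/- Fix k ≥ 2, δ ∈ (0,1), an integer m with 0 < m < k, and means 1 ≥ μ_1 > μ_2 > … > μ_k ≥ 0 with gaps Δ_i = μ_1 − μ_i. For a subset S ⊆ [k], define the limiting regret upper bounds R̂_S(LCB) = min over i ∈ [k] of [ Δ_i + c_i(S) ] + δ and R̂_S(UCB) = min over i ∈ [k] of [ Δ_i + max_{j > i} c_j(S) ] + δ (max over an empty set being 0), where c_i(S) = 0 if i ∈ S and c_i(S) = √(8 log(k/δ)) if i ∉ S. If S is drawn uniformly at random from all subsets of [k] of size m, then P( R̂_S(LCB) < R̂_S(UCB) ) ≥ 1 − (k−m)! m! / k!. -/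
open Real

noncomputable section

/-- The limiting confidence width: `0` for arms in `S` (observed infinitely often) and
`√(8 log(k/δ))` for arms outside `S` (observed once). -/
def cWidth {k : ℕ} (δ : ℝ) (S : Finset (Fin k)) (i : Fin k) : ℝ :=
  if i ∈ S then 0 else Real.sqrt (8 * Real.log ((k : ℝ) / δ))

/-- Limiting regret upper bound for LCB: `min_i (Δ_i + c_i(S)) + δ`. -/
def RhatLCB {k : ℕ} (hk : 0 < k) (δ : ℝ) (μ : Fin k → ℝ) (S : Finset (Fin k)) : ℝ :=
  (⨅ i : Fin k, ((μ ⟨0, hk⟩ - μ i) + cWidth δ S i)) + δ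

/-- Limiting regret upper bound for UCB: `min_i (Δ_i + max_{j>i} c_j(S)) + δ`, the max over
the empty set being `0` (the value of a real `⨆` over an empty index type). -/
def RhatUCB {k : ℕ} (hk : 0 < k) (δ : ℝ) (μ : Fin k → ℝ) (S : Finset (Fin k)) : ℝ :=
  (⨅ i : Fin k, ((μ ⟨0, hk⟩ - μ i) + ⨆ j : {j : Fin k // i < j}, cWidth δ S j.1)) + δ


lemma lcb_lt_ucb_key {k : ℕ} (hk0 : 0 < k) (hk2 : 2 ≤ k) {δ : ℝ}
    (hδ : δ ∈ Set.Ioo (0 : ℝ) 1)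
    {μ : Fin k → ℝ} (hμanti : StrictAnti μ) (hμmem : ∀ i, μ i ∈ Set.Icc (0 : ℝ) 1)
    {S : Finset (Fin k)} (hS : S.Nonempty) (hSc : Sᶜ.Nonempty)
    (hlt : S.min' hS < Sᶜ.max' hSc) :
    RhatLCB hk0 δ μ S < RhatUCB hk0 δ μ S := by
  obtain ⟨hδ0, hδ1⟩ := hδ
  set w := Real.sqrt (8 * Real.log ((k : ℝ) / δ)) with hw
  have hw1 : 1 < w := by
    have hk2' : (2 : ℝ) ≤ (k : ℝ) := by exact_mod_cast hk2
    have h2 : (2 : ℝ) ≤ (k : ℝ) / δ := by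
      have : (k : ℝ) ≤ (k : ℝ) / δ := by
        rw [le_div_iff₀ hδ0]; nlinarith
      linarith
    have hlog : Real.log 2 ≤ Real.log ((k : ℝ) / δ) :=
      Real.log_le_log (by norm_num) h2
    have h8 : (1 : ℝ) < 8 * Real.log ((k : ℝ) / δ) := by
      have := Real.log_two_gt_d9; linarith
    calc (1 : ℝ) = Real.sqrt 1 := Real.sqrt_one.symm
      _ < w := Real.sqrt_lt_sqrt (by norm_num) h8
  have hw0 : (0 : ℝ) ≤ w := Real.sqrt_nonneg _
  have hcw_le : ∀ i : Fin k, cWidth δ S i ≤ w := by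
    intro i; unfold cWidth; split
    · exact hw0
    · exact le_rfl
  have hcw0 : ∀ i : Fin k, 0 ≤ cWidth δ S i := by
    intro i; unfold cWidth; split
    · exact le_rfl
    · exact hw0
  have hΔ0 : ∀ i : Fin k, 0 ≤ μ ⟨0, hk0⟩ - μ i := by
    intro i
    have : μ i ≤ μ ⟨0, hk0⟩ :=
      hμanti.antitone (show (⟨0, hk0⟩ : Fin k) ≤ i from by simp [Fin.le_def])
    linarith
  have hΔ1 : ∀ i : Fin k, μ ⟨0, hk0⟩ - μ i ≤ 1 := by
    intro i
    have h1 := (hμmem ⟨0, hk0⟩).2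
    have h2 := (hμmem i).1
    linarith
  set i0 := S.min' hS with hi0
  set jm := Sᶜ.max' hSc with hjm
  have hi0S : i0 ∈ S := S.min'_mem hS
  have hjmS : jm ∉ S := Finset.mem_compl.mp (Sᶜ.max'_mem hSc)
  have hBdd : BddBelow (Set.range fun i : Fin k => (μ ⟨0, hk0⟩ - μ i) + cWidth δ S i) := by
    refine ⟨0, ?_⟩
    rintro x ⟨i, rfl⟩
    exact add_nonneg (hΔ0 i) (hcw0 i)
  have hL : RhatLCB hk0 δ μ S ≤ (μ ⟨0, hk0⟩ - μ i0) + δ := by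
    unfold RhatLCB
    have h := ciInf_le hBdd i0
    have hcw : cWidth δ S i0 = 0 := by simp [cWidth, hi0S]
    rw [hcw] at h
    linarith
  have hU : (μ ⟨0, hk0⟩ - μ jm) + δ ≤ RhatUCB hk0 δ μ S := by
    unfold RhatUCB
    have h : μ ⟨0, hk0⟩ - μ jm ≤
        ⨅ i : Fin k, ((μ ⟨0, hk0⟩ - μ i) + ⨆ j : {j : Fin k // i < j}, cWidth δ S j.1) := by
      haveI : Nonempty (Fin k) := ⟨⟨0, hk0⟩⟩
      refine le_ciInf fun i => ?_
      rcases le_or_gt jm i with hji | hij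
      · have h1 : μ i ≤ μ jm := hμanti.antitone hji
        have h2 : 0 ≤ ⨆ j : {j : Fin k // i < j}, cWidth δ S j.1 :=
          Real.iSup_nonneg fun j => hcw0 j.1
        linarith
      · have hb : BddAbove (Set.range fun j : {j : Fin k // i < j} => cWidth δ S j.1) := by
          refine ⟨w, ?_⟩
          rintro x ⟨j, rfl⟩
          exact hcw_le j.1
        have h3 : w ≤ ⨆ j : {j : Fin k // i < j}, cWidth δ S j.1 := by
          have h := le_ciSup hb (⟨jm, hij⟩ : {j : Fin k // i < j})
          have hcw : cWidth δ S jm = w := by rw [hw]; simp [cWidth, hjmS]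
          rw [hcw] at h
          exact h
        have := hΔ1 jm
        have := hΔ0 i
        linarith
    linarith
  have hmono : μ jm < μ i0 := hμanti hlt
  linarith

lemma bad_set_unique {k : ℕ} (hk0 : 0 < k) {m : ℕ} (hm0 : 0 < m) (hmk : m < k)
    {S : Finset (Fin k)} (hcard : S.card = m)
    (hS : S.Nonempty) (hSc : Sᶜ.Nonempty)
    (hbad : ¬ S.min' hS < Sᶜ.max' hSc) :
    S = Finset.Ici (⟨k - m, by omega⟩ : Fin k) := by
  set i0 := S.min' hS with hi0
  set jm := Sᶜ.max' hSc with hjm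
  have hi0S : i0 ∈ S := S.min'_mem hS
  have hjmS : jm ∉ S := Finset.mem_compl.mp (Sᶜ.max'_mem hSc)
  have hne : jm ≠ i0 := fun h => hjmS (h ▸ hi0S)
  have hlt : jm < i0 := lt_of_le_of_ne (not_lt.mp hbad) hne
  have hiff : ∀ i : Fin k, i ∈ S ↔ i0 ≤ i := by
    intro i
    constructor
    · intro hi; exact S.min'_le i hi
    · intro hi
      by_contra hnot
      have h1 : i ∈ Sᶜ := Finset.mem_compl.mpr hnot
      have h2 : i ≤ jm := Sᶜ.le_max' i h1
      exact absurd (lt_of_le_of_lt (le_trans hi h2) hlt) (lt_irrefl i0)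
  have hSeq : S = Finset.Ici i0 := by
    ext i
    simp [Finset.mem_Ici, hiff i]
  have hcard2 : (Finset.Ici i0).card = k - (i0 : ℕ) := Fin.card_Ici i0
  have hval : (i0 : ℕ) = k - m := by
    have := i0.isLt
    rw [hSeq, hcard2] at hcard
    omega
  exact hSeq.trans (congrArg Finset.Ici (Fin.ext hval))

lemma count_bound {α : Type*} (T : Finset α) (p : α → Prop) [DecidablePred p]
    (h : ∀ a ∈ T, ¬ p a → ∀ b ∈ T, ¬ p b → a = b) :
    T.card ≤ (T.filter p).card + 1 := by
  have hsplit := Finset.card_filter_add_card_filter_not (s := T) (p := p)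
  have hbad : (T.filter (fun a => ¬ p a)).card ≤ 1 := by
    rw [Finset.card_le_one]
    intro a ha b hb
    rw [Finset.mem_filter] at ha hb
    exact h a ha.1 ha.2 b hb.1 hb.2
  omega

lemma ratio_bound (a b : ℕ) (hb : 0 < b) (h : b ≤ a + 1) :
    1 - 1 / (b : ℝ) ≤ (a : ℝ) / (b : ℝ) := by
  have hb' : (0 : ℝ) < (b : ℝ) := by exact_mod_cast hb
  have h' : (b : ℝ) ≤ (a : ℝ) + 1 := by exact_mod_cast h
  have h1 : 1 - 1 / (b : ℝ) = ((b : ℝ) - 1) / (b : ℝ) := by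
    field_simp
  rw [h1]
  gcongr
  linarith

/-- if `S` is drawn uniformly from the size-`m` subsets of `[k]`, the
probability that the LCB limiting bound beats the UCB limiting bound is at least
`1 − (k−m)! m! / k!`.  The uniform probability is expressed as a counting ratio. -/
theorem lcb_beats_ucb_whp {k : ℕ} (hk : 2 ≤ k) (δ : ℝ) (hδ : δ ∈ Set.Ioo (0 : ℝ) 1)
    (m : ℕ) (hm0 : 0 < m) (hmk : m < k)
    (μ : Fin k → ℝ) (hμanti : StrictAnti μ) (hμmem : ∀ i, μ i ∈ Set.Icc (0 : ℝ) 1) :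
    1 - ((k - m).factorial * m.factorial : ℝ) / (k.factorial : ℝ) ≤
      ((((Finset.univ : Finset (Fin k)).powersetCard m).filter
          (fun S => RhatLCB (by omega) δ μ S < RhatUCB (by omega) δ μ S)).card : ℝ) /
        ((((Finset.univ : Finset (Fin k)).powersetCard m)).card : ℝ) := by
  have hk0 : 0 < k := by omega
  have hTcard : ((Finset.univ : Finset (Fin k)).powersetCard m).card = k.choose m := by
    rw [Finset.card_powersetCard, Finset.card_univ, Fintype.card_fin]
  have hCpos : 0 < k.choose m := Nat.choose_pos hmk.le
  have hfacpos : (0 : ℝ) < (k.factorial : ℝ) := by exact_mod_cast k.factorial_pos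
  have hCpos' : (0 : ℝ) < (k.choose m : ℝ) := by exact_mod_cast hCpos
  have hfrac : ((k - m).factorial * m.factorial : ℝ) / (k.factorial : ℝ)
      = 1 / ((k.choose m : ℕ) : ℝ) := by
    rw [div_eq_div_iff hfacpos.ne' hCpos'.ne', one_mul]
    rw [← Nat.choose_mul_factorial_mul_factorial hmk.le]
    push_cast
    ring
  rw [hfrac, ← hTcard]
  apply ratio_bound
  · rw [hTcard]; exact hCpos
  · apply count_bound
    intro a ha hpa b hb hpb
    have key : ∀ S : Finset (Fin k), S ∈ (Finset.univ : Finset (Fin k)).powersetCard m →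
        ¬ RhatLCB hk0 δ μ S < RhatUCB hk0 δ μ S →
        S = Finset.Ici (⟨k - m, by omega⟩ : Fin k) := by
      intro S hST hP
      have hcard : S.card = m := (Finset.mem_powersetCard.mp hST).2
      have hS : S.Nonempty := Finset.card_pos.mp (by omega)
      have hSc : Sᶜ.Nonempty := by
        rw [← Finset.card_pos, Finset.card_compl, Fintype.card_fin, hcard]
        omega
      refine bad_set_unique hk0 hm0 hmk hcard hS hSc ?_
      intro hlt
      exact hP (lcb_lt_ucb_key hk0 hk hδ hμanti hμmem hS hSc hlt)
    rw [key a ha hpa, key b hb hpb]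


end
end

section
/- In the two-armed Gaussian sufficient-statistic model, fix λ ∈ ℝ, η > 0, and let θ₁ = (λ + η/n₁, λ − η/n₂) and θ₂ = (λ − η/n₁, λ + η/n₂), with Δ = η(1/n₁ + 1/n₂) and σ² = 1/n₁ + 1/n₂. Then the minimum over all algorithms A of max{ R(A,θ₁), R(A,θ₂) } equals Δ · Φ(−Δ/σ), where Φ is the standard normal CDF, and this minimum is attained by the algorithm A₀ that outputs 1 if X₁ − X₂ ≥ 0 and 2 otherwise, which satisfies R(A₀,θ₁) = R(A₀,θ₂) = Δ · Φ(−Δ/σ). -/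
open MeasureTheory ProbabilityTheory Real

noncomputable section

/-- The law of the sufficient statistic `X = (X₁, X₂)` with independent
`Xᵢ ~ N(θᵢ, 1/nᵢ)`. -/
def gauss2 (n₁ n₂ : ℝ) (θ : ℝ × ℝ) : Measure (ℝ × ℝ) :=
  (gaussianReal θ.1 (Real.toNNReal (1 / n₁))).prod (gaussianReal θ.2 (Real.toNNReal (1 / n₂)))

/-- The mean of arm `i` in the two-armed instance `θ`. -/
def armMean (θ : ℝ × ℝ) (i : Fin 2) : ℝ := if i = 0 then θ.1 else θ.2

/-- Simple regret of algorithm `A : ℝ² → {1,2}` on the instance `θ` in the two-armed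
Gaussian sufficient-statistic model with counts `(n₁, n₂)`. -/
def reg2 (n₁ n₂ : ℝ) (θ : ℝ × ℝ) (A : ℝ × ℝ → Fin 2) : ℝ :=
  max θ.1 θ.2 - ∫ x, armMean θ (A x) ∂ gauss2 n₁ n₂ θ

/-- Algorithms: measurable maps `ℝ² → {1,2}`. -/
def Alg2 : Type := {A : ℝ × ℝ → Fin 2 // Measurable A}

/-- Instances with means in `[0,1]²`. -/
def Θ2 : Type := {θ : ℝ × ℝ // θ.1 ∈ Set.Icc (0 : ℝ) 1 ∧ θ.2 ∈ Set.Icc (0 : ℝ) 1}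

/-- The minimax simple regret for counts `(n₁, n₂)`. -/
def minimax2 (n₁ n₂ : ℝ) : ℝ := ⨅ A : Alg2, ⨆ θ : Θ2, reg2 n₁ n₂ θ.1 A.1

/-- The `c`-minimax-optimal algorithms `M_{n,c}`. -/
def Mset (n₁ n₂ c : ℝ) : Set Alg2 :=
  {A | (⨆ θ : Θ2, reg2 n₁ n₂ θ.1 A.1) ≤ c * minimax2 n₁ n₂}

/-- The instance-dependent lower bound `R*_{M_{n,c}}(θ)`. -/
def Rstar2 (n₁ n₂ c : ℝ) (θ : ℝ × ℝ) : ℝ := ⨅ A : Mset n₁ n₂ c, reg2 n₁ n₂ θ A.1.1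

/-- The standard normal CDF `Φ`. -/
def stdNormalCDF (t : ℝ) : ℝ := ((gaussianReal 0 1) (Set.Iic t)).toReal

/-!
On `θ₁` the regret of `A` is `Δ · P_{θ₁}(A = 2)`, on `θ₂` it is `Δ · P_{θ₂}(A = 1)`. The likelihood
ratio of `θ₁` to `θ₂` at `x` is `exp (2η (x₁ - x₂))`, so by the Neyman–Pearson argument the test
`x₁ - x₂ ≥ 0` minimises the sum of these two error probabilities. Since `X₁ - X₂ ~ N(±Δ, σ²)`, both
errors of that test equal `Φ(-Δ/σ)`; hence for every `A` the larger regret is at least the average,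
`Δ Φ(-Δ/σ)`, and `A₀` attains it.
-/

open scoped NNReal ENNReal

lemma gaussianReal_prod_map_sub (a b : ℝ) (v w : ℝ≥0) :
    ((gaussianReal a v).prod (gaussianReal b w)).map (fun p => p.1 - p.2) =
      gaussianReal (a - b) (v + w) := by
  have h : (fun p : ℝ × ℝ => p.1 - p.2) = (fun p => p.1 + p.2) ∘ Prod.map id (fun y => -y) := by
    funext p; simp [sub_eq_add_neg]
  rw [h, ← Measure.map_map (by fun_prop) (by fun_prop),
    ← Measure.map_prod_map _ _ measurable_id (by fun_prop), Measure.map_id, gaussianReal_map_neg,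
    ← Measure.conv, gaussianReal_conv_gaussianReal, sub_eq_add_neg]

lemma gaussianReal_map_standardize {m : ℝ} {v : ℝ≥0} (hv : v ≠ 0) :
    (gaussianReal m v).map (fun x => (x - m) / √v) = gaussianReal 0 1 := by
  have h : (fun x : ℝ => (x - m) / √v) = (· / √v) ∘ (· - m) := rfl
  rw [h, ← Measure.map_map (by fun_prop) (by fun_prop), gaussianReal_map_sub_const,
    gaussianReal_map_div_const, sub_self, zero_div]
  congr
  ext
  simp [hv]

lemma measureReal_gaussianReal_Iic {m : ℝ} {v : ℝ≥0} (hv : v ≠ 0) (t : ℝ) :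
    (gaussianReal m v).real (Set.Iic t) = stdNormalCDF ((t - m) / √v) := by
  have hsqrt : 0 < √(v : ℝ) := Real.sqrt_pos.2 (NNReal.coe_pos.2 (pos_iff_ne_zero.2 hv))
  have hpre : (fun x => (x - m) / √v) ⁻¹' Set.Iic ((t - m) / √v) = Set.Iic t := by
    ext x
    simp [div_le_div_iff_of_pos_right hsqrt]
  rw [stdNormalCDF, ← gaussianReal_map_standardize (m := m) hv,
    Measure.map_apply (by fun_prop) measurableSet_Iic, hpre, measureReal_def]

lemma measureReal_gaussianReal_Iio {m : ℝ} {v : ℝ≥0} (hv : v ≠ 0) (t : ℝ) :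
    (gaussianReal m v).real (Set.Iio t) = stdNormalCDF ((t - m) / √v) := by
  have := nullSingletonClass_gaussianReal (μ := m) hv
  rw [measureReal_congr Iio_ae_eq_Iic, measureReal_gaussianReal_Iic hv]

lemma measureReal_gaussianReal_Ici {m : ℝ} {v : ℝ≥0} (hv : v ≠ 0) (t : ℝ) :
    (gaussianReal m v).real (Set.Ici t) = stdNormalCDF ((m - t) / √v) := by
  have hpre : (fun x : ℝ => -x) ⁻¹' Set.Iic (-t) = Set.Ici t := by ext; simp
  rw [← hpre, ← map_measureReal_apply (by fun_prop) measurableSet_Iic, gaussianReal_map_neg,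
    measureReal_gaussianReal_Iic hv, sub_neg_eq_add, neg_add_eq_sub]

lemma gaussianPDFReal_eq_exp_mul (m m' : ℝ) (v : ℝ≥0) (x : ℝ) :
    gaussianPDFReal m v x =
      exp ((m - m') * (2 * x - m - m') / (2 * v)) * gaussianPDFReal m' v x := by
  simp only [gaussianPDFReal]
  rw [mul_left_comm, ← exp_add]
  ring_nf

theorem withDensity_compl_add_withDensity_le {α : Type*} [MeasurableSpace α] {μ : Measure α}
    {f g : α → ℝ≥0∞} {T S : Set α} (hT : MeasurableSet T) (hS : MeasurableSet S)
    (hgf : ∀ x ∈ T, g x ≤ f x) (hfg : ∀ x ∉ T, f x ≤ g x) :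
    μ.withDensity f Tᶜ + μ.withDensity g T ≤ μ.withDensity f Sᶜ + μ.withDensity g S := by
  rw [withDensity_apply _ hT.compl, withDensity_apply _ hT, withDensity_apply _ hS.compl,
    withDensity_apply _ hS]
  calc ∫⁻ x in Tᶜ, f x ∂μ + ∫⁻ x in T, g x ∂μ
      = ∫⁻ x in Tᶜ, min (f x) (g x) ∂μ + ∫⁻ x in T, min (f x) (g x) ∂μ := by
        congr 1
        · exact setLIntegral_congr_fun hT.compl fun x hx => (min_eq_left (hfg x hx)).symm
        · exact setLIntegral_congr_fun hT fun x hx => (min_eq_right (hgf x hx)).symm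
    _ = ∫⁻ x in Sᶜ, min (f x) (g x) ∂μ + ∫⁻ x in S, min (f x) (g x) ∂μ := by
        rw [add_comm, lintegral_add_compl _ hT, add_comm, lintegral_add_compl _ hS]
    _ ≤ ∫⁻ x in Sᶜ, f x ∂μ + ∫⁻ x in S, g x ∂μ := by
        gcongr <;> simp

instance isProbabilityMeasure_gauss2 (n₁ n₂ : ℝ) (θ : ℝ × ℝ) :
    IsProbabilityMeasure (gauss2 n₁ n₂ θ) := by
  unfold gauss2
  infer_instance

section Gauss2

variable {n₁ n₂ : ℝ}

def gauss2PDFReal (n₁ n₂ : ℝ) (θ x : ℝ × ℝ) : ℝ :=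
  gaussianPDFReal θ.1 (1 / n₁).toNNReal x.1 * gaussianPDFReal θ.2 (1 / n₂).toNNReal x.2

lemma gauss2_eq_withDensity (hn₁ : 0 < n₁) (hn₂ : 0 < n₂) (θ : ℝ × ℝ) :
    gauss2 n₁ n₂ θ = volume.withDensity fun x => ENNReal.ofReal (gauss2PDFReal n₁ n₂ θ x) := by
  rw [gauss2, gaussianReal_of_var_ne_zero _ (by positivity),
    gaussianReal_of_var_ne_zero _ (by positivity),
    prod_withDensity (measurable_gaussianPDF _ _) (measurable_gaussianPDF _ _),
    ← Measure.volume_eq_prod]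
  simp only [gauss2PDFReal, gaussianPDF, ENNReal.ofReal_mul (gaussianPDFReal_nonneg _ _ _)]

lemma gauss2PDFReal_eq_exp_mul (hn₁ : 0 < n₁) (hn₂ : 0 < n₂) (lam η : ℝ) (x : ℝ × ℝ) :
    gauss2PDFReal n₁ n₂ (lam + η / n₁, lam - η / n₂) x =
      exp (2 * η * (x.1 - x.2)) * gauss2PDFReal n₁ n₂ (lam - η / n₁, lam + η / n₂) x := by
  simp only [gauss2PDFReal]
  rw [gaussianPDFReal_eq_exp_mul (lam + η / n₁) (lam - η / n₁),
    gaussianPDFReal_eq_exp_mul (lam - η / n₂) (lam + η / n₂),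
    Real.coe_toNNReal _ (by positivity), Real.coe_toNNReal _ (by positivity)]
  have hexp : (lam + η / n₁ - (lam - η / n₁)) * (2 * x.1 - (lam + η / n₁) - (lam - η / n₁)) /
        (2 * (1 / n₁)) + (lam - η / n₂ - (lam + η / n₂)) *
        (2 * x.2 - (lam - η / n₂) - (lam + η / n₂)) / (2 * (1 / n₂)) = 2 * η * (x.1 - x.2) := by
    field_simp
    ring
  rw [← hexp, exp_add]
  ring

lemma measureReal_gauss2_sub_lt (hn₁ : 0 < n₁) (hn₂ : 0 < n₂) (θ : ℝ × ℝ) (t : ℝ) :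
    (gauss2 n₁ n₂ θ).real {x | x.1 - x.2 < t} =
      stdNormalCDF ((t - (θ.1 - θ.2)) / √(1 / n₁ + 1 / n₂)) := by
  have hv : (1 / n₁).toNNReal + (1 / n₂).toNNReal ≠ 0 := by positivity
  change (gauss2 n₁ n₂ θ).real ((fun x => x.1 - x.2) ⁻¹' Set.Iio t) = _
  rw [← map_measureReal_apply (by fun_prop) measurableSet_Iio,
    gauss2, gaussianReal_prod_map_sub, measureReal_gaussianReal_Iio hv, NNReal.coe_add,
    Real.coe_toNNReal _ (by positivity), Real.coe_toNNReal _ (by positivity)]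

lemma measureReal_gauss2_sub_ge (hn₁ : 0 < n₁) (hn₂ : 0 < n₂) (θ : ℝ × ℝ) (t : ℝ) :
    (gauss2 n₁ n₂ θ).real {x | t ≤ x.1 - x.2} =
      stdNormalCDF ((θ.1 - θ.2 - t) / √(1 / n₁ + 1 / n₂)) := by
  have hv : (1 / n₁).toNNReal + (1 / n₂).toNNReal ≠ 0 := by positivity
  change (gauss2 n₁ n₂ θ).real ((fun x => x.1 - x.2) ⁻¹' Set.Ici t) = _
  rw [← map_measureReal_apply (by fun_prop) measurableSet_Ici,
    gauss2, gaussianReal_prod_map_sub, measureReal_gaussianReal_Ici hv, NNReal.coe_add,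
    Real.coe_toNNReal _ (by positivity), Real.coe_toNNReal _ (by positivity)]

theorem gauss2_threshold_errors_le (hn₁ : 0 < n₁) (hn₂ : 0 < n₂) (lam : ℝ) {η : ℝ} (hη : 0 < η)
    {S : Set (ℝ × ℝ)} (hS : MeasurableSet S) :
    (gauss2 n₁ n₂ (lam + η / n₁, lam - η / n₂)).real {x | 0 ≤ x.1 - x.2}ᶜ +
        (gauss2 n₁ n₂ (lam - η / n₁, lam + η / n₂)).real {x | 0 ≤ x.1 - x.2} ≤
      (gauss2 n₁ n₂ (lam + η / n₁, lam - η / n₂)).real Sᶜ +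
        (gauss2 n₁ n₂ (lam - η / n₁, lam + η / n₂)).real S := by
  have hT : MeasurableSet {x : ℝ × ℝ | 0 ≤ x.1 - x.2} :=
    measurableSet_le measurable_const (by fun_prop)
  have hpdf : ∀ x, 0 ≤ gauss2PDFReal n₁ n₂ (lam - η / n₁, lam + η / n₂) x := fun x =>
    mul_nonneg (gaussianPDFReal_nonneg _ _ _) (gaussianPDFReal_nonneg _ _ _)
  simp only [measureReal_def]
  rw [← ENNReal.toReal_add (by finiteness) (by finiteness),
    ← ENNReal.toReal_add (by finiteness) (by finiteness)]
  refine ENNReal.toReal_mono (by finiteness) ?_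
  rw [gauss2_eq_withDensity hn₁ hn₂, gauss2_eq_withDensity hn₁ hn₂]
  refine withDensity_compl_add_withDensity_le hT hS (fun x hx => ?_) (fun x hx => ?_) <;>
    refine ENNReal.ofReal_le_ofReal ?_ <;>
    rw [gauss2PDFReal_eq_exp_mul hn₁ hn₂]
  · rw [Set.mem_ofPred_eq] at hx
    exact le_mul_of_one_le_left (hpdf x) (one_le_exp (by positivity))
  · rw [Set.mem_ofPred_eq, not_le] at hx
    exact mul_le_of_le_one_left (hpdf x) (exp_le_one_iff.2 (by nlinarith))

end Gauss2

lemma integral_armMean_comp {Ω : Type*} [MeasurableSpace Ω] (μ : Measure Ω)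
    [IsProbabilityMeasure μ] (θ : ℝ × ℝ) {A : Ω → Fin 2} (hA : Measurable A) :
    ∫ x, armMean θ (A x) ∂μ = θ.1 * μ.real (A ⁻¹' {0}) + θ.2 * μ.real (A ⁻¹' {0})ᶜ := by
  have hS : MeasurableSet (A ⁻¹' {0}) := hA (measurableSet_singleton 0)
  have harm : (fun x => armMean θ (A x)) = fun x =>
      (A ⁻¹' {0}).indicator (fun _ => θ.1) x + (A ⁻¹' {0})ᶜ.indicator (fun _ => θ.2) x := by
    funext x
    by_cases h : A x = 0 <;> simp [armMean, h]
  rw [harm,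
    integral_add ((integrable_const _).indicator hS) ((integrable_const _).indicator hS.compl),
    integral_indicator_const _ hS, integral_indicator_const _ hS.compl, smul_eq_mul, smul_eq_mul,
    mul_comm, mul_comm (μ.real _)]

section Regret

variable {n₁ n₂ : ℝ} {θ : ℝ × ℝ} {A : ℝ × ℝ → Fin 2}

lemma reg2_eq_of_le (h : θ.2 ≤ θ.1) (hA : Measurable A) :
    reg2 n₁ n₂ θ A = (θ.1 - θ.2) * (gauss2 n₁ n₂ θ).real (A ⁻¹' {0})ᶜ := by
  rw [reg2, integral_armMean_comp _ _ hA, max_eq_left h]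
  linear_combination (-θ.1) * probReal_add_probReal_compl (μ := gauss2 n₁ n₂ θ)
    (hA (measurableSet_singleton 0))

lemma reg2_eq_of_ge (h : θ.1 ≤ θ.2) (hA : Measurable A) :
    reg2 n₁ n₂ θ A = (θ.2 - θ.1) * (gauss2 n₁ n₂ θ).real (A ⁻¹' {0}) := by
  rw [reg2, integral_armMean_comp _ _ hA, max_eq_right h]
  linear_combination (-θ.2) * probReal_add_probReal_compl (μ := gauss2 n₁ n₂ θ)
    (hA (measurableSet_singleton 0))

end Regret

section BalancedInstances

variable {n₁ n₂ : ℝ} (lam : ℝ) {η : ℝ}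

lemma reg2_balanced_fst (hn₁ : 0 < n₁) (hn₂ : 0 < n₂) (hη : 0 ≤ η) {A : ℝ × ℝ → Fin 2}
    (hA : Measurable A) :
    reg2 n₁ n₂ (lam + η / n₁, lam - η / n₂) A =
      η * (1 / n₁ + 1 / n₂) * (gauss2 n₁ n₂ (lam + η / n₁, lam - η / n₂)).real (A ⁻¹' {0})ᶜ := by
  rw [reg2_eq_of_le (by dsimp only; linarith [div_nonneg hη hn₁.le, div_nonneg hη hn₂.le]) hA]
  ring

lemma reg2_balanced_snd (hn₁ : 0 < n₁) (hn₂ : 0 < n₂) (hη : 0 ≤ η) {A : ℝ × ℝ → Fin 2}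
    (hA : Measurable A) :
    reg2 n₁ n₂ (lam - η / n₁, lam + η / n₂) A =
      η * (1 / n₁ + 1 / n₂) * (gauss2 n₁ n₂ (lam - η / n₁, lam + η / n₂)).real (A ⁻¹' {0}) := by
  rw [reg2_eq_of_ge (by dsimp only; linarith [div_nonneg hη hn₁.le, div_nonneg hη hn₂.le]) hA]
  ring

lemma measureReal_balanced_fst_threshold_compl (hn₁ : 0 < n₁) (hn₂ : 0 < n₂) :
    (gauss2 n₁ n₂ (lam + η / n₁, lam - η / n₂)).real {x | 0 ≤ x.1 - x.2}ᶜ =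
      stdNormalCDF (-(η * (1 / n₁ + 1 / n₂)) / √(1 / n₁ + 1 / n₂)) := by
  rw [show {x : ℝ × ℝ | 0 ≤ x.1 - x.2}ᶜ = {x | x.1 - x.2 < 0} by ext; simp,
    measureReal_gauss2_sub_lt hn₁ hn₂]
  congr 1
  ring

lemma measureReal_balanced_snd_threshold (hn₁ : 0 < n₁) (hn₂ : 0 < n₂) :
    (gauss2 n₁ n₂ (lam - η / n₁, lam + η / n₂)).real {x | 0 ≤ x.1 - x.2} =
      stdNormalCDF (-(η * (1 / n₁ + 1 / n₂)) / √(1 / n₁ + 1 / n₂)) := by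
  rw [measureReal_gauss2_sub_ge hn₁ hn₂]
  congr 1
  ring

end BalancedInstances

/-- Neyman–Pearson-type optimality of the threshold-0 test: on the competing
instances `θ₁ = (λ + η/n₁, λ − η/n₂)` and `θ₂ = (λ − η/n₁, λ + η/n₂)`, the minimum over all
(measurable) algorithms of `max{R(A,θ₁), R(A,θ₂)}` equals `Δ Φ(−Δ/σ)`, and it is attained by
`A₀` (output arm 1 iff `X₁ − X₂ ≥ 0`), which has regret `Δ Φ(−Δ/σ)` on both instances. -/
theorem neyman_pearson_balanced_optimality (n₁ n₂ : ℝ) (hn₁ : 0 < n₁) (hn₂ : 0 < n₂)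
    (lam η : ℝ) (hη : 0 < η) :
    (⨅ A : Alg2,
        max (reg2 n₁ n₂ (lam + η / n₁, lam - η / n₂) A.1)
          (reg2 n₁ n₂ (lam - η / n₁, lam + η / n₂) A.1)) =
      η * (1 / n₁ + 1 / n₂) *
        stdNormalCDF (-(η * (1 / n₁ + 1 / n₂)) / Real.sqrt (1 / n₁ + 1 / n₂)) ∧
    reg2 n₁ n₂ (lam + η / n₁, lam - η / n₂) (fun x => if 0 ≤ x.1 - x.2 then 0 else 1) =
      η * (1 / n₁ + 1 / n₂) *
        stdNormalCDF (-(η * (1 / n₁ + 1 / n₂)) / Real.sqrt (1 / n₁ + 1 / n₂)) ∧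
    reg2 n₁ n₂ (lam - η / n₁, lam + η / n₂) (fun x => if 0 ≤ x.1 - x.2 then 0 else 1) =
      η * (1 / n₁ + 1 / n₂) *
        stdNormalCDF (-(η * (1 / n₁ + 1 / n₂)) / Real.sqrt (1 / n₁ + 1 / n₂)) := by
  set Δ := η * (1 / n₁ + 1 / n₂)
  set p := stdNormalCDF (-Δ / √(1 / n₁ + 1 / n₂))
  set A₀ : ℝ × ℝ → Fin 2 := fun x => if 0 ≤ x.1 - x.2 then 0 else 1
  have hA₀ : Measurable A₀ :=
    Measurable.ite (measurableSet_le measurable_const (by fun_prop)) measurable_const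
      measurable_const
  have hA₀T : A₀ ⁻¹' {0} = {x | 0 ≤ x.1 - x.2} := by
    ext x
    simp [A₀]
  have hA₀₁ : reg2 n₁ n₂ (lam + η / n₁, lam - η / n₂) A₀ = Δ * p := by
    rw [reg2_balanced_fst lam hn₁ hn₂ hη.le hA₀, hA₀T,
      measureReal_balanced_fst_threshold_compl lam hn₁ hn₂]
  have hA₀₂ : reg2 n₁ n₂ (lam - η / n₁, lam + η / n₂) A₀ = Δ * p := by
    rw [reg2_balanced_snd lam hn₁ hn₂ hη.le hA₀, hA₀T,
      measureReal_balanced_snd_threshold lam hn₁ hn₂]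
  have hlower (A : Alg2) : Δ * p ≤ max (reg2 n₁ n₂ (lam + η / n₁, lam - η / n₂) A.1)
      (reg2 n₁ n₂ (lam - η / n₁, lam + η / n₂) A.1) := by
    have herr := gauss2_threshold_errors_le hn₁ hn₂ lam hη (A.2 (measurableSet_singleton 0))
    rw [measureReal_balanced_fst_threshold_compl lam hn₁ hn₂,
      measureReal_balanced_snd_threshold lam hn₁ hn₂] at herr
    have hscaled := mul_le_mul_of_nonneg_left herr (by positivity : 0 ≤ Δ)
    rw [reg2_balanced_fst lam hn₁ hn₂ hη.le A.2, reg2_balanced_snd lam hn₁ hn₂ hη.le A.2,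
      le_max_iff]
    by_contra! h
    linarith [h.1, h.2]
  have : Nonempty Alg2 := ⟨⟨A₀, hA₀⟩⟩
  refine ⟨ciInf_eq_of_forall_ge_of_forall_gt_exists_lt hlower fun w hw => ⟨⟨A₀, hA₀⟩, ?_⟩,
    hA₀₁, hA₀₂⟩
  rwa [hA₀₁, hA₀₂, max_self]

end
end

section
/- Fix counts n₁, n₂ ≥ 1. There exists Δ ∈ (0,1] such that, letting θ₁ be the two-armed Gaussian instance with means (Δ, 0) and θ₂ the one with means (−Δ, 0) (both with unit-variance rewards), every algorithm A satisfies (1/2) R(A,θ₁) + (1/2) R(A,θ₂) ≥ 1/(13 √n₁). -/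
open MeasureTheory ProbabilityTheory Real

noncomputable section

/-- The data space: `n i` i.i.d. real observations for each arm `i`. -/
abbrev Data {k : ℕ} (n : Fin k → ℕ) : Type := ∀ i : Fin k, Fin (n i) → ℝ

/-- The law of the data when arm `i`'s rewards have distribution `P i`. -/
def dataMeasure {k : ℕ} (n : Fin k → ℕ) (P : Fin k → Measure ℝ) : Measure (Data n) :=
  Measure.pi fun i => Measure.pi fun _ : Fin (n i) => P i

/-- A bandit instance: each `P i` is a probability measure on `ℝ` with mean
`μ i ∈ [0,1]` that is 1-subgaussian. -/
structure IsBanditInstance {k : ℕ} (P : Fin k → Measure ℝ) (μ : Fin k → ℝ) : Prop where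
  prob : ∀ i, IsProbabilityMeasure (P i)
  mean_mem : ∀ i, μ i ∈ Set.Icc (0 : ℝ) 1
  mean_eq : ∀ i, (∫ x, x ∂ P i) = μ i
  subgaussian : ∀ i, ∀ l : ℝ, (∫ x, Real.exp (l * (x - μ i)) ∂ P i) ≤ Real.exp (l ^ 2 / 2)

/-- Simple regret of algorithm `A` on the instance `(P, μ)` with counts `n`. -/
def simpleRegret {k : ℕ} (n : Fin k → ℕ) (P : Fin k → Measure ℝ) (μ : Fin k → ℝ)
    (A : Data n → Fin k) : ℝ :=
  (⨆ i, μ i) - ∫ x, μ (A x) ∂ dataMeasure n P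

/-- Sample mean of arm `i`. -/
def sampleMean {k : ℕ} (n : Fin k → ℕ) (x : Data n) (i : Fin k) : ℝ :=
  (∑ j, x i j) / (n i : ℝ)

/-!
Moving the first arm's mean from `Δ` to `-Δ` multiplies the law of the data by the likelihood
ratio `R = ∏ⱼ exp (-2Δ (X₁ⱼ - Δ) - 2Δ²)`, whose second moment under `θ₁` is `exp (4 n₁ Δ²)`.
Since `R ≤ 1 + R² / 4` pointwise, every event `s` satisfies `P₂ s ≤ P₁ s + E₁[R²] / 4`, so the two
error probabilities of any test sum to at least `1 - exp (4 n₁ Δ²) / 4`. The Bayesian regret is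
`Δ / 2` times that sum, and `Δ = 1 / (4 √n₁)` gives `E₁[R²] = exp (1/4) ≤ 4/3`.
-/

open scoped ENNReal NNReal

namespace MeasureTheory

variable {ι : Type*} [Fintype ι] {E : ι → Type*} [∀ i, MeasurableSpace (E i)]

theorem lintegral_fintype_prod_eq_prod (μ : ∀ i, Measure (E i))
    [∀ i, IsProbabilityMeasure (μ i)] {f : ∀ i, E i → ℝ≥0∞} (hf : ∀ i, Measurable (f i)) :
    ∫⁻ x, ∏ i, f i (x i) ∂Measure.pi μ = ∏ i, ∫⁻ y, f i y ∂μ i := by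
  rw [lintegral_prod_eq_prod_lintegral_of_indepFun _ _
    (iIndepFun_pi fun i => (hf i).aemeasurable) fun i => (hf i).comp (measurable_pi_apply i)]
  exact Finset.prod_congr rfl fun i _ => (measurePreserving_eval μ i).lintegral_comp (hf i)

theorem Measure.pi_withDensity (μ : ∀ i, Measure (E i)) [∀ i, IsProbabilityMeasure (μ i)]
    {f : ∀ i, E i → ℝ≥0∞} (hf : ∀ i, Measurable (f i))
    [∀ i, SigmaFinite ((μ i).withDensity (f i))] :
    Measure.pi (fun i => (μ i).withDensity (f i))
      = (Measure.pi μ).withDensity (fun x => ∏ i, f i (x i)) := by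
  refine Measure.pi_eq fun s hs => ?_
  have hind : (Set.univ.pi s).indicator (fun x => ∏ i, f i (x i))
      = fun x => ∏ i, (s i).indicator (f i) (x i) := by
    classical
    ext x
    simp only [Set.indicator_apply, Finset.prod_ite_zero, Set.mem_univ_pi, Finset.mem_univ,
      true_implies]
  rw [withDensity_apply _ (.univ_pi hs), ← lintegral_indicator (.univ_pi hs), hind,
    lintegral_fintype_prod_eq_prod μ fun i => (hf i).indicator (hs i)]
  simp_rw [lintegral_indicator (hs _), withDensity_apply _ (hs _)]

end MeasureTheory

section DataMeasure

variable {k : ℕ} (n : Fin k → ℕ) (P : Fin k → Measure ℝ) [∀ i, IsProbabilityMeasure (P i)]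

instance : IsProbabilityMeasure (dataMeasure n P) := by
  unfold dataMeasure; infer_instance

theorem lintegral_dataMeasure_prod {f : Fin k → ℝ → ℝ≥0∞} (hf : ∀ i, Measurable (f i)) :
    ∫⁻ x, ∏ i, ∏ j, f i (x i j) ∂dataMeasure n P = ∏ i, (∫⁻ y, f i y ∂P i) ^ n i := by
  rw [dataMeasure, lintegral_fintype_prod_eq_prod _ (E := fun i => Fin (n i) → ℝ)
    (f := fun i y => ∏ j, f i (y j)) fun i => by fun_prop]
  simp_rw [lintegral_fintype_prod_eq_prod _ fun _ => hf _, Finset.prod_const, Finset.card_univ,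
    Fintype.card_fin]

theorem dataMeasure_withDensity {f : Fin k → ℝ → ℝ≥0∞} (hf : ∀ i, Measurable (f i))
    [∀ i, IsProbabilityMeasure ((P i).withDensity (f i))] :
    (dataMeasure n P).withDensity (fun x => ∏ i, ∏ j, f i (x i j))
      = dataMeasure n fun i => (P i).withDensity (f i) := by
  have hinner : ∀ i, (Measure.pi fun _ : Fin (n i) => P i).withDensity
      (fun y => ∏ j, f i (y j)) = Measure.pi fun _ => (P i).withDensity (f i) :=
    fun i => (Measure.pi_withDensity _ fun _ => hf i).symm
  have : ∀ i, SigmaFinite ((Measure.pi fun _ : Fin (n i) => P i).withDensity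
      (fun y => ∏ j, f i (y j))) := fun i => by rw [hinner]; infer_instance
  rw [dataMeasure, dataMeasure, ← Measure.pi_withDensity _ (E := fun i => Fin (n i) → ℝ)
    (f := fun i y => ∏ j, f i (y j)) fun i => by fun_prop]
  simp_rw [hinner]

end DataMeasure

namespace ProbabilityTheory

theorem lintegral_exp_mul_gaussianReal (m : ℝ) (v : ℝ≥0) (t : ℝ) :
    ∫⁻ x, ENNReal.ofReal (exp (t * x)) ∂gaussianReal m v
      = ENNReal.ofReal (exp (m * t + v * t ^ 2 / 2)) := by
  rw [← ofReal_integral_eq_lintegral_ofReal (integrable_exp_mul_gaussianReal t)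
    (ae_of_all _ fun _ => (exp_pos _).le), ← congrFun mgf_id_gaussianReal t]
  rfl

/-- The density `d𝒩(m + t, 1) / d𝒩(m, 1)`. -/
def gaussianShiftDensity (m t x : ℝ) : ℝ≥0∞ :=
  ENNReal.ofReal (exp (t * (x - m) - t ^ 2 / 2))

@[fun_prop]
theorem measurable_gaussianShiftDensity (m t : ℝ) : Measurable (gaussianShiftDensity m t) := by
  unfold gaussianShiftDensity; fun_prop

theorem gaussianReal_withDensity_gaussianShiftDensity (m t : ℝ) :
    (gaussianReal m 1).withDensity (gaussianShiftDensity m t) = gaussianReal (m + t) 1 := by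
  rw [gaussianReal_of_var_ne_zero _ one_ne_zero, gaussianReal_of_var_ne_zero _ one_ne_zero,
    ← withDensity_mul _ (measurable_gaussianPDF _ _) (measurable_gaussianShiftDensity m t)]
  congr 1
  ext x
  simp only [Pi.mul_apply, gaussianPDF, gaussianShiftDensity]
  rw [← ENNReal.ofReal_mul (gaussianPDFReal_nonneg _ _ _)]
  congr 1
  simp only [gaussianPDFReal, NNReal.coe_one, mul_one, mul_assoc, ← exp_add]
  congr 2
  ring

theorem lintegral_gaussianShiftDensity_sq (m t : ℝ) :
    ∫⁻ x, gaussianShiftDensity m t x ^ 2 ∂gaussianReal m 1 = ENNReal.ofReal (exp (t ^ 2)) := by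
  have hsq : ∀ x, gaussianShiftDensity m t x ^ 2
      = ENNReal.ofReal (exp (-(2 * t * m) - t ^ 2)) * ENNReal.ofReal (exp (2 * t * x)) := by
    intro x
    rw [gaussianShiftDensity, ← ENNReal.ofReal_pow (exp_pos _).le,
      ← ENNReal.ofReal_mul (exp_pos _).le, ← exp_nat_mul, ← exp_add]
    congr 2
    push_cast
    ring
  simp_rw [hsq]
  rw [lintegral_const_mul _ (by fun_prop), lintegral_exp_mul_gaussianReal,
    ← ENNReal.ofReal_mul (exp_pos _).le, ← exp_add]
  congr 2
  push_cast
  ring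

end ProbabilityTheory

open ProbabilityTheory

section GaussianData

variable {k : ℕ} (n : Fin k → ℕ) (m t : Fin k → ℝ)

theorem dataMeasure_gaussianReal_add :
    dataMeasure n (fun i => gaussianReal (m i + t i) 1)
      = (dataMeasure n fun i => gaussianReal (m i) 1).withDensity
          fun x => ∏ i, ∏ j, gaussianShiftDensity (m i) (t i) (x i j) := by
  have : ∀ i, IsProbabilityMeasure
      ((gaussianReal (m i) 1).withDensity (gaussianShiftDensity (m i) (t i))) := fun i => by
    rw [gaussianReal_withDensity_gaussianShiftDensity]; infer_instance
  simp_rw [dataMeasure_withDensity n _ fun i => measurable_gaussianShiftDensity (m i) (t i),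
    gaussianReal_withDensity_gaussianShiftDensity]

theorem lintegral_dataMeasure_gaussianShiftDensity_sq :
    ∫⁻ x, (∏ i, ∏ j, gaussianShiftDensity (m i) (t i) (x i j)) ^ 2
        ∂dataMeasure n (fun i => gaussianReal (m i) 1)
      = ENNReal.ofReal (exp (∑ i, n i * t i ^ 2)) := by
  simp_rw [← Finset.prod_pow]
  rw [lintegral_dataMeasure_prod n _ (f := fun i y => gaussianShiftDensity (m i) (t i) y ^ 2)
    fun i => by fun_prop]
  simp_rw [lintegral_gaussianShiftDensity_sq, ← ENNReal.ofReal_pow (exp_pos _).le, ← exp_nat_mul]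
  rw [← ENNReal.ofReal_prod_of_nonneg fun i _ => (exp_pos _).le, ← exp_sum]

end GaussianData

theorem ENNReal.le_one_add_inv_four_mul_sq (a : ℝ≥0∞) : a ≤ 1 + 4⁻¹ * a ^ 2 := by
  rcases eq_or_ne a ⊤ with rfl | ha
  · simp
  have h : a.toReal ≤ 1 + 4⁻¹ * a.toReal ^ 2 := by nlinarith [sq_nonneg (a.toReal - 2)]
  rw [← ENNReal.ofReal_toReal ha]
  calc ENNReal.ofReal a.toReal ≤ ENNReal.ofReal (1 + 4⁻¹ * a.toReal ^ 2) :=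
        ENNReal.ofReal_le_ofReal h
    _ = _ := by
      rw [ENNReal.ofReal_add zero_le_one (by positivity), ENNReal.ofReal_mul (by norm_num),
        ENNReal.ofReal_pow ENNReal.toReal_nonneg, ENNReal.ofReal_inv_of_pos (by norm_num)]
      norm_num

namespace MeasureTheory

variable {α : Type*} [MeasurableSpace α] {μ : Measure α} {R : α → ℝ≥0∞} {s : Set α}

theorem withDensity_apply_le_add_lintegral_sq (hs : MeasurableSet s) :
    μ.withDensity R s ≤ μ s + 4⁻¹ * ∫⁻ x, R x ^ 2 ∂μ := calc
  μ.withDensity R s = ∫⁻ x in s, R x ∂μ := withDensity_apply _ hs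
  _ ≤ ∫⁻ x in s, (1 + 4⁻¹ * R x ^ 2) ∂μ :=
    lintegral_mono fun x => ENNReal.le_one_add_inv_four_mul_sq _
  _ = μ s + 4⁻¹ * ∫⁻ x in s, R x ^ 2 ∂μ := by
    rw [lintegral_add_left measurable_const, setLIntegral_const, one_mul,
      lintegral_const_mul' _ _ (by norm_num)]
  _ ≤ μ s + 4⁻¹ * ∫⁻ x, R x ^ 2 ∂μ := by gcongr; exact Measure.restrict_le_self

theorem one_sub_le_measureReal_add_withDensity_compl [IsFiniteMeasure μ]
    [IsProbabilityMeasure (μ.withDensity R)] (hs : MeasurableSet s)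
    (hR : ∫⁻ x, R x ^ 2 ∂μ ≠ ⊤) :
    1 - (∫⁻ x, R x ^ 2 ∂μ).toReal / 4 ≤ μ.real s + (μ.withDensity R).real sᶜ := by
  have h := withDensity_apply_le_add_lintegral_sq (R := R) (μ := μ) hs
  have h' := ENNReal.toReal_mono (by finiteness) h
  rw [ENNReal.toReal_add (by finiteness) (by finiteness), ENNReal.toReal_mul] at h'
  rw [probReal_compl_eq_one_sub hs]
  simp only [measureReal_def] at *
  norm_num at h'
  linarith

end MeasureTheory

theorem one_sub_exp_div_four_le_measureReal_add_compl {k : ℕ} (n : Fin k → ℕ) (m t : Fin k → ℝ)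
    {s : Set (Data n)} (hs : MeasurableSet s) :
    1 - exp (∑ i, n i * t i ^ 2) / 4
      ≤ (dataMeasure n fun i => gaussianReal (m i) 1).real s
        + (dataMeasure n fun i => gaussianReal (m i + t i) 1).real sᶜ := by
  have : IsProbabilityMeasure ((dataMeasure n fun i => gaussianReal (m i) 1).withDensity
      fun x => ∏ i, ∏ j, gaussianShiftDensity (m i) (t i) (x i j)) :=
    dataMeasure_gaussianReal_add n m t ▸ inferInstance
  have h := one_sub_le_measureReal_add_withDensity_compl hs
    (lintegral_dataMeasure_gaussianShiftDensity_sq n m t ▸ ENNReal.ofReal_ne_top)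
  rwa [lintegral_dataMeasure_gaussianShiftDensity_sq, ENNReal.toReal_ofReal (exp_pos _).le,
    ← dataMeasure_gaussianReal_add] at h

theorem simpleRegret_eq_sum_gap {k : ℕ} {n : Fin k → ℕ} {P : Fin k → Measure ℝ}
    [∀ i, IsProbabilityMeasure (P i)] {A : Data n → Fin k} (hA : Measurable A) (μ : Fin k → ℝ) :
    simpleRegret n P μ A
      = ∑ i, (dataMeasure n P).real (A ⁻¹' {i}) * ((⨆ j, μ j) - μ i) := by
  have : IsProbabilityMeasure ((dataMeasure n P).map A) :=
    Measure.isProbabilityMeasure_map hA.aemeasurable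
  have hsum : ∑ i, ((dataMeasure n P).map A).real {i} = 1 := by simp
  rw [simpleRegret, ← integral_map hA.aemeasurable (by fun_prop), integral_fintype (.of_finite)]
  conv_lhs => rw [← one_mul (⨆ j, μ j), ← hsum, Finset.sum_mul, ← Finset.sum_sub_distrib]
  simp_rw [smul_eq_mul, ← mul_sub, map_measureReal_apply hA (measurableSet_singleton _)]

theorem simpleRegret_two_arms {n : Fin 2 → ℕ} {P : Fin 2 → Measure ℝ}
    [∀ i, IsProbabilityMeasure (P i)] {A : Data n → Fin 2} (hA : Measurable A) (a b : ℝ) :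
    simpleRegret n P ![a, b] A
      = (dataMeasure n P).real (A ⁻¹' {0}) * (max a b - a)
        + (dataMeasure n P).real (A ⁻¹' {1}) * (max a b - b) := by
  have hsup : ⨆ i, ![a, b] i = max a b :=
    eq_of_forall_ge_iff fun c => by simp [ciSup_le_iff, Fin.forall_fin_two]
  rw [simpleRegret_eq_sum_gap hA, Fin.sum_univ_two, hsup]
  rfl

theorem simpleRegret_add_simpleRegret_neg {n : Fin 2 → ℕ} {P Q : Fin 2 → Measure ℝ}
    [∀ i, IsProbabilityMeasure (P i)] [∀ i, IsProbabilityMeasure (Q i)] {A : Data n → Fin 2}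
    (hA : Measurable A) {Δ : ℝ} (hΔ : 0 ≤ Δ) :
    simpleRegret n P ![Δ, 0] A + simpleRegret n Q ![-Δ, 0] A
      = Δ * ((dataMeasure n P).real (A ⁻¹' {1}) + (dataMeasure n Q).real (A ⁻¹' {1})ᶜ) := by
  have hcompl : A ⁻¹' {0} = (A ⁻¹' {1})ᶜ := by
    ext x
    simp only [Set.mem_preimage, Set.mem_singleton_iff, Set.mem_compl_iff]
    omega
  rw [simpleRegret_two_arms hA, simpleRegret_two_arms hA, hcompl, max_eq_left hΔ,
    max_eq_right (by linarith)]
  ring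

theorem two_instance_lower_bound_general (n₁ n₂ : ℕ) (hn₁ : 1 ≤ n₁) :
    ∃ Δ : ℝ, Δ ∈ Set.Ioc (0 : ℝ) 1 ∧
      ∀ A : Data ![n₁, n₂] → Fin 2, Measurable A →
        1 / (13 * Real.sqrt (n₁ : ℝ)) ≤
          (1 / 2) * simpleRegret ![n₁, n₂]
              (fun i => gaussianReal (![Δ, 0] i) 1) ![Δ, 0] A +
            (1 / 2) * simpleRegret ![n₁, n₂]
              (fun i => gaussianReal (![-Δ, 0] i) 1) ![-Δ, 0] A := by
  have hsqrt : 1 ≤ √(n₁ : ℝ) := one_le_sqrt.mpr (by exact_mod_cast hn₁)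
  set Δ : ℝ := 1 / (4 * √(n₁ : ℝ)) with hΔ
  have hΔpos : 0 < Δ := by positivity
  refine ⟨Δ, ⟨hΔpos, by rw [hΔ, div_le_one (by positivity)]; linarith⟩, fun A hA => ?_⟩
  have htest := one_sub_exp_div_four_le_measureReal_add_compl ![n₁, n₂] ![Δ, 0] ![-(2 * Δ), 0]
    (hA (measurableSet_singleton 1))
  have hmean : ∀ i, ![Δ, 0] i + ![-(2 * Δ), 0] i = ![-Δ, 0] i :=
    Fin.forall_fin_two.mpr ⟨by simp only [Matrix.cons_val_zero]; ring, by simp⟩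
  have hχ : ∑ i, (![n₁, n₂] i : ℝ) * ![-(2 * Δ), 0] i ^ 2 = 1 / 4 := by
    simp only [Fin.sum_univ_two, Matrix.cons_val_zero, Matrix.cons_val_one,
      Matrix.cons_val_fin_one]
    rw [hΔ]
    field_simp
    rw [sq_sqrt (Nat.cast_nonneg _)]
    ring
  simp only [hmean, hχ] at htest
  have hexp : exp (1 / 4) ≤ 4 / 3 := calc
    exp (1 / 4) ≤ 1 / (1 - 1 / 4) := exp_bound_div_one_sub_of_interval (by norm_num) (by norm_num)
    _ = 4 / 3 := by norm_num
  rw [← mul_add, simpleRegret_add_simpleRegret_neg hA hΔpos.le]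
  calc 1 / (13 * √(n₁ : ℝ)) ≤ 1 / 2 * (Δ * (1 - (4 / 3) / 4)) := by
        rw [hΔ]; field_simp; norm_num
    _ ≤ _ := by gcongr; linarith

/-- two-instance lemma for the `Ω(1/√n₁)` part of the minimax lower bound.
For counts `(n₁, n₂)` there is `Δ ∈ (0,1]` such that, with `θ₁` the two-armed Gaussian
instance with means `(Δ, 0)` and `θ₂` the one with means `(−Δ, 0)` (unit-variance rewards),
every algorithm has Bayesian regret at least `1/(13√n₁)` under the uniform prior on
`{θ₁, θ₂}`. -/
theorem two_instance_lower_bound (n₁ n₂ : ℕ) (hn₁ : 1 ≤ n₁) (hn₂ : 1 ≤ n₂) :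
    ∃ Δ : ℝ, Δ ∈ Set.Ioc (0 : ℝ) 1 ∧
      ∀ A : Data ![n₁, n₂] → Fin 2, Measurable A →
        1 / (13 * Real.sqrt (n₁ : ℝ)) ≤
          (1 / 2) * simpleRegret ![n₁, n₂]
              (fun i => gaussianReal (![Δ, 0] i) 1) ![Δ, 0] A +
            (1 / 2) * simpleRegret ![n₁, n₂]
              (fun i => gaussianReal (![-Δ, 0] i) 1) ![-Δ, 0] A :=
  two_instance_lower_bound_general n₁ n₂ hn₁
end
end
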